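/- Suppose x* is optimal for the primal LP max r^T x s.t. A x ≤ c, y* is optimal for its dual min c^T y s.t. A^T y = r, y ≥ 0, the index sets (I*, J*) form an optimal basis with x*_{I*} > 0 componentwise and y*_{J*^c} = 0, and A_{J*,I*}^T y*_{J*} = r_{I*}. Then for any sequence x^1, ..., x^N ∈ R^{d_1} with x^n_{I*^c} = 0 for all n, and any sequence of matrices A^1, ..., A^N with E[A^n] = A_{J*,I*} and A^n independent of x^n given the history, defining c^1 = N·c_{J*} and c^{n+1} = c^n - A^n x^n_{I*}, it holds that N·V^{LP} - Σ_{n=1}^N r^T E[x^n] ≤ Σ_{(s,a) ∈ J*} y*_{(s,a)} · E[c^N_{(s,a)}]. -/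

import Mathlib

open Matrix MeasureTheory

/-!
Summing the budget recursion gives `E[c^N] = N c_{J*} - Σₙ A_{J*,I*} E[xⁿ_{I*}]`, using
`E[Aⁿ xⁿ] = A_{J*,I*} E[xⁿ]`. Pairing with `y*_{J*}` and using complementary slackness
`A_{J*,I*}ᵀ y*_{J*} = r_{I*}` turns each term into `rᵀ E[xⁿ]`, since `xⁿ` is supported on `I*`,
while `y*_{J*}ᵀ c_{J*} = cᵀ y* = V^{LP}` because `y*` is supported on `J*`. The bound therefore
holds with equality.
-/

theorem dotProduct_comp_of_eq_zero_of_notMem_range {m n R : Type*} [Fintype m] [Fintype n]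
    [NonUnitalNonAssocSemiring R] {ι : m → n} (hι : Function.Injective ι) (u v : n → R)
    (hv : ∀ i, (∀ t, ι t ≠ i) → v i = 0) :
    (u ∘ ι) ⬝ᵥ (v ∘ ι) = u ⬝ᵥ v :=
  Fintype.sum_of_injective ι hι _ _
    (fun i hi => by simp [hv i fun t ht => hi ⟨t, ht⟩]) fun _ => rfl

theorem integral_dotProduct {Ω n : Type*} [Fintype n] [MeasurableSpace Ω] {μ : Measure Ω}
    (r : n → ℝ) {X : Ω → n → ℝ} (hX : ∀ i, Integrable (fun ω => X ω i) μ) :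
    ∫ ω, r ⬝ᵥ X ω ∂μ = r ⬝ᵥ fun i => ∫ ω, X ω i ∂μ := by
  simp only [dotProduct]
  rw [integral_finsetSum _ fun i _ => (hX i).const_mul (r i)]
  simp only [integral_const_mul]

theorem eq_sub_sum_range_of_succ_eq_sub {G : Type*} [AddCommGroup G] {f g : ℕ → G} {N : ℕ}
    (h : ∀ n < N, f (n + 1) = f n - g n) : f N = f 0 - ∑ n ∈ Finset.range N, g n := by
  induction N with
  | zero => simp
  | succ N ih =>
    rw [h N N.lt_succ_self, ih fun n hn => h n (hn.trans N.lt_succ_self),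
      Finset.sum_range_succ, sub_sub]

theorem integral_eq_sub_sum_of_succ_eq_sub {Ω n : Type*} [MeasurableSpace Ω] {μ : Measure Ω}
    [IsProbabilityMeasure μ] {N : ℕ} {b : n → ℝ} {cs D : ℕ → Ω → n → ℝ}
    (h0 : ∀ ω t, cs 0 ω t = b t) (hD : ∀ k t, Integrable (fun ω => D k ω t) μ)
    (hrec : ∀ k ω, k < N → cs (k + 1) ω = cs k ω - D k ω) (t : n) :
    ∫ ω, cs N ω t ∂μ = b t - ∑ k ∈ Finset.range N, ∫ ω, D k ω t ∂μ := by
  have hpath : ∀ ω, cs N ω t = b t - ∑ k ∈ Finset.range N, D k ω t := fun ω => by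
    rw [eq_sub_sum_range_of_succ_eq_sub (f := fun k => cs k ω t) (g := fun k => D k ω t)
      fun k hk => congrFun (hrec k ω hk) t, h0]
  simp_rw [hpath]
  rw [integral_sub (integrable_const _) (integrable_finsetSum _ fun k _ => hD k t),
    integral_finsetSum _ fun k _ => hD k t, integral_const, probReal_univ, one_smul]

theorem resolving_regret_decomposition_general {Ω : Type*} [MeasurableSpace Ω]
    (μ : Measure Ω) [IsProbabilityMeasure μ]
    (K d1 d2 N : ℕ)
    (A : Matrix (Fin K) (Fin d1) ℝ) (c : Fin K → ℝ) (r : Fin d1 → ℝ)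
    (ι : Fin d2 → Fin d1) (ρ : Fin d2 → Fin K)
    (hι : Function.Injective ι) (hρ : Function.Injective ρ)
    (ystar : Fin K → ℝ) (V : ℝ)
    (hV2 : V = c ⬝ᵥ ystar)
    -- (I*, J*) an optimal basis with x*_{I*} > 0, y*_{J*ᶜ} = 0
    (hysupp : ∀ k, (∀ t, ρ t ≠ k) → ystar k = 0)
    -- complementary slackness A_{J*,I*}ᵀ y*_{J*} = r_{I*}
    (hcs : (A.submatrix ρ ι)ᵀ.mulVec (fun t => ystar (ρ t)) = fun t => r (ι t))
    -- the random sequences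
    (xs : ℕ → Ω → Fin d1 → ℝ) (As : ℕ → Ω → Matrix (Fin d2) (Fin d2) ℝ)
    (hxssupp : ∀ n ω i, (∀ t, ι t ≠ i) → xs n ω i = 0)
    (hxint : ∀ n i, Integrable (fun ω => xs n ω i) μ)
    (hAxint : ∀ n t, Integrable
      (fun ω => (As n ω).mulVec (fun u => xs n ω (ι u)) t) μ)
    -- Aⁿ independent of xⁿ (given the history): E[Aⁿ xⁿ] = A_{J*,I*} E[xⁿ]
    (hAx : ∀ n t, ∫ ω, (As n ω).mulVec (fun u => xs n ω (ι u)) t ∂μ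
        = (A.submatrix ρ ι).mulVec (fun u => ∫ ω, xs n ω (ι u) ∂μ) t)
    -- the budget process
    (cs : ℕ → Ω → Fin d2 → ℝ)
    (hcs0 : ∀ ω t, cs 0 ω t = (N : ℝ) * c (ρ t))
    (hcsrec : ∀ n ω, n < N →
      cs (n + 1) ω = cs n ω - (As n ω).mulVec (fun u => xs n ω (ι u))) :
    (N : ℝ) * V - ∑ n ∈ Finset.range N, ∫ ω, r ⬝ᵥ xs n ω ∂μ
      ≤ ∑ t, ystar (ρ t) * ∫ ω, cs N ω t ∂μ := by
  set B := A.submatrix ρ ι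
  set mean : ℕ → Fin d2 → ℝ := fun n u => ∫ ω, xs n ω (ι u) ∂μ
  have hbudget : (fun t => ∫ ω, cs N ω t ∂μ)
      = (N : ℝ) • (c ∘ ρ) - ∑ n ∈ Finset.range N, B *ᵥ mean n := by
    funext t
    rw [integral_eq_sub_sum_of_succ_eq_sub hcs0 hAxint hcsrec]
    simp [hAx, Finset.sum_apply, B, mean]
  have hreward : ∀ n, ∫ ω, r ⬝ᵥ xs n ω ∂μ = (ystar ∘ ρ) ⬝ᵥ (B *ᵥ mean n) := by
    intro n
    rw [integral_dotProduct r (hxint n), ← dotProduct_comp_of_eq_zero_of_notMem_range hι,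
      dotProduct_mulVec, ← mulVec_transpose]
    · exact congrArg (· ⬝ᵥ mean n) hcs.symm
    · intro i hi; simp [hxssupp n _ i hi]
  have hvalue : V = (c ∘ ρ) ⬝ᵥ (ystar ∘ ρ) := by
    rw [hV2, dotProduct_comp_of_eq_zero_of_notMem_range hρ c ystar hysupp]
  refine le_of_eq ?_
  change _ = (ystar ∘ ρ) ⬝ᵥ (fun t => ∫ ω, cs N ω t ∂μ)
  rw [hbudget, dotProduct_sub, dotProduct_smul, dotProduct_sum, hvalue, dotProduct_comm (c ∘ ρ),
    smul_eq_mul]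
  simp only [hreward]

/-- the regret decomposition lemma: for the resolving process
with budgets c¹ = N·c_{J*}, cⁿ⁺¹ = cⁿ - Aⁿ xⁿ_{I*}, it holds that
N·V^LP - Σₙ rᵀE[xⁿ] ≤ Σ_{(s,a)∈J*} y*_{(s,a)} E[c^N_{(s,a)}]. -/
theorem resolving_regret_decomposition {Ω : Type*} [MeasurableSpace Ω]
    (μ : Measure Ω) [IsProbabilityMeasure μ]
    (K d1 d2 N : ℕ)
    (A : Matrix (Fin K) (Fin d1) ℝ) (c : Fin K → ℝ) (r : Fin d1 → ℝ)
    (ι : Fin d2 → Fin d1) (ρ : Fin d2 → Fin K)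
    (hι : Function.Injective ι) (hρ : Function.Injective ρ)
    (xstar : Fin d1 → ℝ) (ystar : Fin K → ℝ) (V : ℝ)
    -- x* optimal for the primal, y* optimal for the dual
    (hxfeas : ∀ k, A.mulVec xstar k ≤ c k)
    (hxopt : ∀ y : Fin d1 → ℝ, (∀ k, A.mulVec y k ≤ c k) → r ⬝ᵥ y ≤ r ⬝ᵥ xstar)
    (hyfeas : Aᵀ.mulVec ystar = r) (hynn : ∀ k, 0 ≤ ystar k)
    (hyopt : ∀ z : Fin K → ℝ, Aᵀ.mulVec z = r → (∀ k, 0 ≤ z k) →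
      c ⬝ᵥ ystar ≤ c ⬝ᵥ z)
    (hV1 : V = r ⬝ᵥ xstar) (hV2 : V = c ⬝ᵥ ystar)
    -- (I*, J*) an optimal basis with x*_{I*} > 0, y*_{J*ᶜ} = 0
    (hxpos : ∀ t, 0 < xstar (ι t))
    (hxsupp : ∀ i, (∀ t, ι t ≠ i) → xstar i = 0)
    (hysupp : ∀ k, (∀ t, ρ t ≠ k) → ystar k = 0)
    -- complementary slackness A_{J*,I*}ᵀ y*_{J*} = r_{I*}
    (hcs : (A.submatrix ρ ι)ᵀ.mulVec (fun t => ystar (ρ t)) = fun t => r (ι t))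
    -- the random sequences
    (xs : ℕ → Ω → Fin d1 → ℝ) (As : ℕ → Ω → Matrix (Fin d2) (Fin d2) ℝ)
    (hxssupp : ∀ n ω i, (∀ t, ι t ≠ i) → xs n ω i = 0)
    (hxint : ∀ n i, Integrable (fun ω => xs n ω i) μ)
    (hAxint : ∀ n t, Integrable
      (fun ω => (As n ω).mulVec (fun u => xs n ω (ι u)) t) μ)
    -- E[Aⁿ] = A_{J*,I*}
    (hAmean : ∀ n j k, ∫ ω, As n ω j k ∂μ = A.submatrix ρ ι j k)
    -- Aⁿ independent of xⁿ (given the history): E[Aⁿ xⁿ] = A_{J*,I*} E[xⁿ]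
    (hAx : ∀ n t, ∫ ω, (As n ω).mulVec (fun u => xs n ω (ι u)) t ∂μ
        = (A.submatrix ρ ι).mulVec (fun u => ∫ ω, xs n ω (ι u) ∂μ) t)
    -- the budget process
    (cs : ℕ → Ω → Fin d2 → ℝ)
    (hcs0 : ∀ ω t, cs 0 ω t = (N : ℝ) * c (ρ t))
    (hcsrec : ∀ n ω, n < N →
      cs (n + 1) ω = cs n ω - (As n ω).mulVec (fun u => xs n ω (ι u))) :
    (N : ℝ) * V - ∑ n ∈ Finset.range N, ∫ ω, r ⬝ᵥ xs n ω ∂μ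
      ≤ ∑ t, ystar (ρ t) * ∫ ω, cs N ω t ∂μ :=
  resolving_regret_decomposition_general μ K d1 d2 N A c r ι ρ hι hρ ystar V hV2 hysupp hcs xs As
    hxssupp hxint hAxint hAx cs hcs0 hcsrec
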